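/- Let r be a weakly transitive relation on a set W that additionally satisfies the wK4T₀ condition: for all w, v, if r w v and r v w then r w w or r v v. Then there exist a type X, a T₀ topology on X, and a surjective map π : X → W such that for every A ⊆ W, derivedSet (π ⁻¹' A) = π ⁻¹' {w | ∃ v, r w v ∧ v ∈ A}. -/

import Mathlib

/-!
Blow every reflexive world up into a copy of `ℤ` of levels and keep an irreflexive world as a
single point at level `⊥`. A basic neighbourhood of `x`, indexed by `p : ℤ`, consists of `x`,
all points over strict successors of its world, and the points over its cluster of level
below `p`. Letting `p` decrease, a reflexive world becomes a limit of its own copies, an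
irreflexive one (at the bottom level) is a limit of its cluster-mates but not of itself, and
points of one cluster are separated by their levels, except that two irreflexive
cluster-mates would be inseparable: this is what wK4T₀ rules out.
-/

universe u

open Set Filter Topology TopologicalSpace

section NhdsBasis

variable {X ι : Type*} [SemilatticeInf ι] [Nonempty ι]

theorem hasBasis_nhds_generateFrom_range (N : X → ι → Set X)
    (mono : ∀ x, Monotone (N x)) (self_mem : ∀ x i, x ∈ N x i)
    (subset_of_mem : ∀ x y i, y ∈ N x i → N y i ⊆ N x i) (x : X) :
    (@nhds X (generateFrom (range (Function.uncurry N))) x).HasBasis (fun _ => True) (N x) := by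
  let := generateFrom (range (Function.uncurry N))
  have basis : IsTopologicalBasis (range (Function.uncurry N)) := by
    refine ⟨?_, ?_, rfl⟩
    · rintro _ ⟨⟨a, i⟩, rfl⟩ _ ⟨⟨b, j⟩, rfl⟩ y ⟨hya, hyb⟩
      exact ⟨N y (i ⊓ j), ⟨⟨y, i ⊓ j⟩, rfl⟩, self_mem y _,
        subset_inter ((mono y inf_le_left).trans (subset_of_mem a y i hya))
          ((mono y inf_le_right).trans (subset_of_mem b y j hyb))⟩
    · exact eq_univ_of_forall fun y => ⟨_, ⟨⟨y, Classical.arbitrary ι⟩, rfl⟩, self_mem y _⟩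
  refine basis.nhds_hasBasis.to_hasBasis ?_
    fun i _ => ⟨N x i, ⟨⟨⟨x, i⟩, rfl⟩, self_mem x i⟩, le_rfl⟩
  rintro _ ⟨⟨⟨a, i⟩, rfl⟩, hxa⟩
  exact ⟨i, trivial, subset_of_mem a x i hxa⟩

end NhdsBasis

section Relation

variable {W : Type u} {r : W → W → Prop}

def WeaklyTransitive (r : W → W → Prop) : Prop := ∀ w s t, r w s → r s t → w = t ∨ r w t

def StrictSucc (r : W → W → Prop) (w v : W) : Prop := r w v ∧ ¬ r v w

theorem StrictSucc.trans_rel (hwt : WeaklyTransitive r) {w v u : W}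
    (hwv : StrictSucc r w v) (hvu : r v u) : StrictSucc r w u := by
  refine ⟨?_, fun huw => ?_⟩
  · rcases hwt w v u hwv.1 hvu with rfl | hwu
    · exact absurd hvu hwv.2
    · exact hwu
  · rcases hwt v u w hvu huw with rfl | hvw
    · exact hwv.2 hwv.1
    · exact hwv.2 hvw

theorem StrictSucc.rel_trans (hwt : WeaklyTransitive r) {w v u : W}
    (hwv : r w v) (hvu : StrictSucc r v u) : StrictSucc r w u := by
  refine ⟨?_, fun huw => ?_⟩
  · rcases hwt w v u hwv hvu.1 with rfl | hwu
    · exact absurd hwv hvu.2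
    · exact hwu
  · rcases hwt u w v huw hwv with rfl | huv
    · exact hvu.2 hvu.1
    · exact hvu.2 huv

end Relation

@[ext]
structure FrameSpace {W : Type u} (r : W → W → Prop) where
  world : W
  level : WithBot ℤ
  level_eq_bot_iff : level = ⊥ ↔ ¬ r world world

namespace FrameSpace

variable {W : Type u} {r : W → W → Prop}

theorem world_surjective : Function.Surjective (world : FrameSpace r → W) := by
  intro w
  by_cases hw : r w w
  · exact ⟨⟨w, 0, by simp [hw]⟩, rfl⟩
  · exact ⟨⟨w, ⊥, by simp [hw]⟩, rfl⟩

def basicNhd (x : FrameSpace r) (p : ℤ) : Set (FrameSpace r) :=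
  {y | y = x ∨ (r x.world y.world ∧ r y.world x.world ∧ y.level < p) ∨
    StrictSucc r x.world y.world}

instance : TopologicalSpace (FrameSpace r) :=
  generateFrom (range (Function.uncurry basicNhd))

theorem basicNhd_mono (x : FrameSpace r) : Monotone (basicNhd x) := by
  rintro p q hpq y (rfl | ⟨hxy, hyx, hy⟩ | hxy)
  · exact Or.inl rfl
  · exact Or.inr (Or.inl ⟨hxy, hyx, hy.trans_le (WithBot.coe_le_coe.2 hpq)⟩)
  · exact Or.inr (Or.inr hxy)

theorem basicNhd_subset_of_mem (hwt : WeaklyTransitive r) {x y : FrameSpace r} {p : ℤ}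
    (hy : y ∈ basicNhd x p) : basicNhd y p ⊆ basicNhd x p := by
  rintro u (rfl | ⟨hyu, huy, hu⟩ | hyu)
  · exact hy
  · rcases hy with rfl | ⟨hxy, hyx, -⟩ | hxy
    · exact Or.inr (Or.inl ⟨hyu, huy, hu⟩)
    · by_cases hux : u.world = x.world
      · by_cases hxx : r x.world x.world
        · exact Or.inr (Or.inl ⟨hux ▸ hxx, hux ▸ hxx, hu⟩)
        · refine Or.inl (FrameSpace.ext hux ?_)
          rw [u.level_eq_bot_iff.2 (hux ▸ hxx), x.level_eq_bot_iff.2 hxx]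
      · exact Or.inr (Or.inl ⟨(hwt _ _ _ hxy hyu).resolve_left (Ne.symm hux),
          (hwt _ _ _ huy hyx).resolve_left hux, hu⟩)
    · exact Or.inr (Or.inr (hxy.trans_rel hwt hyu))
  · rcases hy with rfl | ⟨hxy, -, -⟩ | hxy
    · exact Or.inr (Or.inr hyu)
    · exact Or.inr (Or.inr (hyu.rel_trans hwt hxy))
    · exact Or.inr (Or.inr (hxy.trans_rel hwt hyu.1))

theorem hasBasis_nhds (hwt : WeaklyTransitive r) (x : FrameSpace r) :
    (𝓝 x).HasBasis (fun _ => True) (basicNhd x) :=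
  hasBasis_nhds_generateFrom_range basicNhd basicNhd_mono
    (fun _ _ => Or.inl rfl) (fun _ _ _ => basicNhd_subset_of_mem hwt) x

theorem rel_of_mem_basicNhd {x y : FrameSpace r} {p : ℤ} (hy : y ∈ basicNhd x p) (hyx : y ≠ x) :
    r x.world y.world := by
  rcases hy with rfl | ⟨hxy, -, -⟩ | hxy
  · exact absurd rfl hyx
  · exact hxy
  · exact hxy.1

theorem exists_mem_basicNhd (x : FrameSpace r) (p : ℤ) {v : W} (hxv : r x.world v) :
    ∃ y ∈ basicNhd x p, y ≠ x ∧ y.world = v := by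
  by_cases hvx : r v x.world
  · by_cases hvv : r v v
    · obtain ⟨n, hnp, hnx⟩ : ∃ n : ℤ, n < p ∧ (n : WithBot ℤ) ≠ x.level := by
        by_cases h : ((p - 1 : ℤ) : WithBot ℤ) = x.level
        · exact ⟨p - 2, by omega, by rw [← h]; norm_cast; omega⟩
        · exact ⟨p - 1, by omega, h⟩
      refine ⟨⟨v, n, by simp [hvv]⟩, Or.inr (Or.inl ⟨hxv, hvx, WithBot.coe_lt_coe.2 hnp⟩),
        fun h => hnx (congrArg level h), rfl⟩
    · refine ⟨⟨v, ⊥, by simp [hvv]⟩, Or.inr (Or.inl ⟨hxv, hvx, WithBot.bot_lt_coe p⟩),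
        fun h => by subst h; exact hvv hxv, rfl⟩
  · obtain ⟨y, rfl⟩ := world_surjective (r := r) v
    exact ⟨y, Or.inr (Or.inr ⟨hxv, hvx⟩), fun h => hvx (h ▸ hxv), rfl⟩

theorem derivedSet_preimage_world (hwt : WeaklyTransitive r) (A : Set W) :
    derivedSet (world ⁻¹' A : Set (FrameSpace r)) = world ⁻¹' {w | ∃ v, r w v ∧ v ∈ A} := by
  ext x
  rw [mem_derivedSet, accPt_iff_frequently, (hasBasis_nhds hwt x).frequently_iff]
  constructor
  · intro h
    obtain ⟨y, hy, hyx, hyA⟩ := h 0 trivial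
    exact ⟨y.world, rel_of_mem_basicNhd hy hyx, hyA⟩
  · rintro ⟨v, hxv, hvA⟩ p -
    obtain ⟨y, hy, hyx, rfl⟩ := exists_mem_basicNhd x p hxv
    exact ⟨y, hy, hyx, hvA⟩

theorem of_forall_mem_basicNhd {x y : FrameSpace r} (hy : ∀ p, y ∈ basicNhd x p) :
    y = x ∨ StrictSucc r x.world y.world ∨
      (r x.world y.world ∧ r y.world x.world ∧ ¬ r y.world y.world) := by
  rcases hy 0 with rfl | ⟨hxy, hyx, -⟩ | hxy
  · exact Or.inl rfl
  · by_cases hyy : r y.world y.world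
    · obtain ⟨n, hn⟩ := WithBot.ne_bot_iff_exists.1 (mt y.level_eq_bot_iff.1 (not_not.2 hyy))
      rcases hy n with h | ⟨-, -, hlt⟩ | hxy
      · exact Or.inl h
      · exact absurd (hn ▸ hlt) (lt_irrefl _)
      · exact Or.inr (Or.inl hxy)
    · exact Or.inr (Or.inr ⟨hxy, hyx, hyy⟩)
  · exact Or.inr (Or.inl hxy)

theorem t0Space (hwt : WeaklyTransitive r)
    (hT0 : ∀ w v : W, r w v → r v w → r w w ∨ r v v) : T0Space (FrameSpace r) := by
  refine (t0Space_iff_inseparable _).2 fun x y hxy => ?_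
  have mem_of_inseparable {a b : FrameSpace r} (h : Inseparable a b) (p : ℤ) :
      b ∈ basicNhd a p :=
    mem_of_mem_nhds (h.nhds_eq ▸ (hasBasis_nhds hwt a).mem_of_mem trivial)
  rcases of_forall_mem_basicNhd (mem_of_inseparable hxy) with rfl | hxy' | ⟨hxy', hyx', hyy⟩
  · rfl
  all_goals rcases of_forall_mem_basicNhd (mem_of_inseparable hxy.symm) with h | hyx | ⟨hyx, -, hxx⟩
  · exact h
  · exact absurd hyx.1 hxy'.2
  · exact absurd hyx hxy'.2
  · exact h
  · exact absurd hxy' hyx.2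
  · exact ((hT0 _ _ hxy' hyx').elim hxx hyy).elim

end FrameSpace

theorem exists_T0_dmorphism_onto_wK4T0_frame {W : Type u} (r : W → W → Prop)
    (hwt : ∀ w s t : W, r w s → r s t → w = t ∨ r w t)
    (hT0 : ∀ w v : W, r w v → r v w → r w w ∨ r v v) :
    ∃ (X : Type u) (t : TopologicalSpace X) (π : X → W),
      @T0Space X t ∧
      Function.Surjective π ∧
      ∀ A : Set W,
        @derivedSet X t (π ⁻¹' A) = π ⁻¹' {w | ∃ v, r w v ∧ v ∈ A} :=
  ⟨FrameSpace r, inferInstance, FrameSpace.world, FrameSpace.t0Space hwt hT0,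
    FrameSpace.world_surjective, FrameSpace.derivedSet_preimage_world hwt⟩
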